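/- arXiv:2001.11276 — 6 statements merged into one kernel-verified Lean document; each statement's English description precedes it below -/
import Mathlib

section
/- The vector fields D = z∂_z + 2w∂_w, R = iz∂_z, I₁ = (w + 2iz²)∂_z + 2izw∂_w, I₂ = (iw + 2z²)∂_z + 2zw∂_w, J = zw∂_z + w²∂_w on ℂ² satisfy the commutation relations: [D,R]=0, [D,I₁]=I₁, [D,I₂]=I₂, [D,J]=2J, [R,I₁]=−I₂, [R,I₂]=I₁, [R,J]=0, [I₁,I₂]=4J, [I₁,J]=0, [I₂,J]=0. -/
open Complex

noncomputable section

/-! Each field is polynomial, so its Jacobian follows from the differentiation rules;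
the ten relations are then polynomial identities in `z, w` modulo `I ^ 2 = -1`. -/

/-- Lie bracket of holomorphic vector fields on ℂ² (viewed as maps `ℂ × ℂ → ℂ × ℂ`
giving the `∂_z` and `∂_w` components): `[X,Y](p) = DY(p)[X(p)] − DX(p)[Y(p)]`. -/
def VFbracket (X Y : ℂ × ℂ → ℂ × ℂ) : ℂ × ℂ → ℂ × ℂ :=
  fun p => fderiv ℂ Y p (X p) - fderiv ℂ X p (Y p)

def VF_D : ℂ × ℂ → ℂ × ℂ := fun p => (p.1, 2 * p.2)
def VF_R : ℂ × ℂ → ℂ × ℂ := fun p => (I * p.1, 0)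
def VF_I1 : ℂ × ℂ → ℂ × ℂ := fun p => (p.2 + 2 * I * p.1 ^ 2, 2 * I * p.1 * p.2)
def VF_I2 : ℂ × ℂ → ℂ × ℂ := fun p => (I * p.2 + 2 * p.1 ^ 2, 2 * p.1 * p.2)
def VF_J : ℂ × ℂ → ℂ × ℂ := fun p => (p.1 * p.2, p.2 ^ 2)

theorem fderiv_VF_D_apply (p v : ℂ × ℂ) : fderiv ℂ VF_D p v = VF_D v := by
  unfold VF_D
  rw [DifferentiableAt.fderiv_prodMk (by fun_prop) (by fun_prop)]
  simp (disch := fun_prop) [fderiv_fun_mul, fderiv_fst, fderiv_snd]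

theorem fderiv_VF_R_apply (p v : ℂ × ℂ) : fderiv ℂ VF_R p v = VF_R v := by
  unfold VF_R
  rw [DifferentiableAt.fderiv_prodMk (by fun_prop) (by fun_prop)]
  simp (disch := fun_prop) [fderiv_fun_mul, fderiv_fst]

theorem fderiv_VF_I1_apply (p v : ℂ × ℂ) :
    fderiv ℂ VF_I1 p v = (v.2 + 4 * I * p.1 * v.1, 2 * I * (v.1 * p.2 + p.1 * v.2)) := by
  unfold VF_I1
  rw [DifferentiableAt.fderiv_prodMk (by fun_prop) (by fun_prop)]
  simp (disch := fun_prop) [fderiv_fun_add, fderiv_fun_mul, fderiv_fun_pow, fderiv_fst,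
    fderiv_snd]
  constructor <;> ring

theorem fderiv_VF_I2_apply (p v : ℂ × ℂ) :
    fderiv ℂ VF_I2 p v = (I * v.2 + 4 * p.1 * v.1, 2 * (v.1 * p.2 + p.1 * v.2)) := by
  unfold VF_I2
  rw [DifferentiableAt.fderiv_prodMk (by fun_prop) (by fun_prop)]
  simp (disch := fun_prop) [fderiv_fun_add, fderiv_fun_mul, fderiv_fun_pow, fderiv_fst,
    fderiv_snd]
  constructor <;> ring

theorem fderiv_VF_J_apply (p v : ℂ × ℂ) :
    fderiv ℂ VF_J p v = (p.1 * v.2 + p.2 * v.1, 2 * p.2 * v.2) := by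
  unfold VF_J
  rw [DifferentiableAt.fderiv_prodMk (by fun_prop) (by fun_prop)]
  simp (disch := fun_prop) [fderiv_fun_mul, fderiv_fun_pow, fderiv_fst, fderiv_snd]

/-- Commutation relations of the isotropy algebra of the Heisenberg sphere:
`[D,R]=0, [D,I₁]=I₁, [D,I₂]=I₂, [D,J]=2J, [R,I₁]=−I₂, [R,I₂]=I₁, [R,J]=0,
`[I₁,I₂]=4J, [I₁,J]=0, [I₂,J]=0`. -/
theorem isotropy_commutation_relations :
    (VFbracket VF_D VF_R = fun _ => 0) ∧
    (VFbracket VF_D VF_I1 = VF_I1) ∧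
    (VFbracket VF_D VF_I2 = VF_I2) ∧
    (VFbracket VF_D VF_J = fun p => (2 : ℂ) • VF_J p) ∧
    (VFbracket VF_R VF_I1 = fun p => -VF_I2 p) ∧
    (VFbracket VF_R VF_I2 = VF_I1) ∧
    (VFbracket VF_R VF_J = fun _ => 0) ∧
    (VFbracket VF_I1 VF_I2 = fun p => (4 : ℂ) • VF_J p) ∧
    (VFbracket VF_I1 VF_J = fun _ => 0) ∧
    (VFbracket VF_I2 VF_J = fun _ => 0) := by
  refine ⟨?_, ?_, ?_, ?_, ?_, ?_, ?_, ?_, ?_, ?_⟩ <;> funext p <;>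
    simp only [VFbracket, fderiv_VF_D_apply, fderiv_VF_R_apply, fderiv_VF_I1_apply,
      fderiv_VF_I2_apply, fderiv_VF_J_apply, VF_D, VF_R, VF_I1, VF_I2, VF_J, Prod.mk_sub_mk,
      Prod.smul_mk, smul_eq_mul, Prod.neg_mk, Prod.ext_iff, Prod.fst_zero, Prod.snd_zero] <;>
    grind [I_sq]

end
end

section
/- For all (x₁,y₁,x₂,y₂) ∈ ℝ⁴, the 4×4 real matrix M = [[0,0,−3a₂,−3b₂],[0,0,−b₂,a₂],[1,0,−2x₁²−6y₁²,4x₁y₁],[0,1,−4x₁y₁,6x₁²+2y₁²]], where a₂ := x₂ + 2x₁²y₁ + 2y₁³ and b₂ := y₂ − 2x₁y₁² − 2x₁³, has rank 4 if (a₂,b₂) ≠ (0,0) and rank 2 if (a₂,b₂) = (0,0). -/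
/-!
In `2 × 2` blocks the matrix is `[[0, B], [1, C]]` with `B = [[-3a₂, -3b₂], [-b₂, a₂]]`. The
identity block makes the lower half of the image arbitrary, so the image is `range B × ℝ²` and
`rank M = 2 + rank B`. Since `det B = -3 (a₂² + b₂²)`, `B` is invertible when `(a₂, b₂) ≠ 0`
and is the zero matrix otherwise.
-/

open Matrix Module

theorem Submodule.finrank_prod {K V W : Type*} [DivisionRing K] [AddCommGroup V] [Module K V]
    [AddCommGroup W] [Module K W] (p : Submodule K V) (q : Submodule K W)
    [FiniteDimensional K p] [FiniteDimensional K q] :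
    finrank K (p.prod q) = finrank K p + finrank K q := by
  have hrange : LinearMap.range (p.subtype.prodMap q.subtype) = p.prod q := by
    rw [LinearMap.range_prodMap, Submodule.range_subtype, Submodule.range_subtype]
  rw [← hrange, LinearMap.finrank_range_of_inj (p.injective_subtype.prodMap q.injective_subtype),
    Module.finrank_prod]

namespace Matrix

variable {K l m n : Type*} [Field K] [Fintype m] [Fintype n] [DecidableEq m]

theorem rank_fromBlocks_zero_one (B : Matrix l n K) (C : Matrix m n K) :
    (fromBlocks 0 B (1 : Matrix m m K) C).rank = Fintype.card m + B.rank := by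
  set e := LinearEquiv.sumArrowLequivProdArrow l m K K
  have hrange :
      LinearMap.range (e.toLinearMap ∘ₗ (fromBlocks 0 B (1 : Matrix m m K) C).mulVecLin) =
        (LinearMap.range B.mulVecLin).prod ⊤ := by
    ext ⟨u, v⟩
    simp only [LinearMap.mem_range, LinearMap.coe_comp, Function.comp_apply, mulVecLin_apply,
      fromBlocks_mulVec, Submodule.mem_prod, Submodule.mem_top, and_true]
    constructor
    · rintro ⟨w, hw⟩
      refine ⟨w ∘ Sum.inr, ?_⟩
      ext i
      simpa [e] using congrFun (congrArg Prod.fst hw) i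
    · rintro ⟨y, rfl⟩
      refine ⟨Sum.elim (v - C *ᵥ y) y, ?_⟩
      ext <;> simp [e]
  rw [rank, ← LinearEquiv.finrank_map_eq e, ← LinearMap.range_comp, hrange,
    Submodule.finrank_prod, finrank_top, finrank_fintype_fun_eq_card, add_comm]
  rfl

end Matrix

/-- For all `(x₁,y₁,x₂,y₂) ∈ ℝ⁴`, with `a₂ := x₂ + 2x₁²y₁ + 2y₁³` and
`b₂ := y₂ − 2x₁y₁² − 2x₁³`, the matrix
`[[0,0,−3a₂,−3b₂],[0,0,−b₂,a₂],[1,0,−2x₁²−6y₁²,4x₁y₁],[0,1,−4x₁y₁,6x₁²+2y₁²]]`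
has rank 4 iff `(a₂,b₂) ≠ (0,0)`, and rank 2 otherwise. -/
theorem rank_of_prolonged_fields_matrix (x₁ y₁ x₂ y₂ : ℝ) :
    let a₂ : ℝ := x₂ + 2 * x₁ ^ 2 * y₁ + 2 * y₁ ^ 3
    let b₂ : ℝ := y₂ - 2 * x₁ * y₁ ^ 2 - 2 * x₁ ^ 3
    let M : Matrix (Fin 4) (Fin 4) ℝ :=
      !![0, 0, -3 * a₂, -3 * b₂;
         0, 0, -b₂, a₂;
         1, 0, -2 * x₁ ^ 2 - 6 * y₁ ^ 2, 4 * x₁ * y₁;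
         0, 1, -4 * x₁ * y₁, 6 * x₁ ^ 2 + 2 * y₁ ^ 2]
    ((a₂, b₂) ≠ (0, 0) → M.rank = 4) ∧ ((a₂, b₂) = (0, 0) → M.rank = 2) := by
  intro a₂ b₂ M
  set B : Matrix (Fin 2) (Fin 2) ℝ := !![-3 * a₂, -3 * b₂; -b₂, a₂]
  set C : Matrix (Fin 2) (Fin 2) ℝ :=
    !![-2 * x₁ ^ 2 - 6 * y₁ ^ 2, 4 * x₁ * y₁; -4 * x₁ * y₁, 6 * x₁ ^ 2 + 2 * y₁ ^ 2]
  have hM : M = (fromBlocks 0 B 1 C).submatrix finSumFinEquiv.symm finSumFinEquiv.symm := by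
    ext i j
    fin_cases i <;> fin_cases j <;> rfl
  have hrank : M.rank = 2 + B.rank := by
    rw [hM, rank_submatrix, rank_fromBlocks_zero_one, Fintype.card_fin]
  have hdet : B.det = -3 * (a₂ * a₂ + b₂ * b₂) := by
    rw [det_fin_two_of]
    ring
  refine ⟨fun hab => ?_, fun hab => ?_⟩
  · have hB : B.det ≠ 0 := by
      rw [hdet]
      refine mul_ne_zero (by norm_num) fun h => hab ?_
      obtain ⟨ha, hb⟩ := mul_self_add_mul_self_eq_zero.mp h
      rw [ha, hb]
    rw [hrank, rank_of_det_ne_zero hB, Fintype.card_fin]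
  · obtain ⟨ha, hb⟩ := Prod.mk_inj.mp hab
    have hB : B = 0 := by
      ext i j
      fin_cases i <;> fin_cases j <;> simp [B, ha, hb]
    rw [hrank, hB, rank_zero]
end

section
/- At every point of ℝ⁴ not lying on Σ₀ = {x₂ = −2x₁²y₁ − 2y₁³, y₂ = 2x₁y₁² + 2x₁³}, the four vector fields D⁽²⁾, R⁽²⁾, I₁⁽²⁾, I₂⁽²⁾ (as in the previous statement) span the tangent space ℝ⁴, i.e. their values at that point are linearly independent. -/
/-!
Write `A = x₂ + 2x₁²y₁ + 2y₁³` and `B = y₂ − 2x₁y₁² − 2x₁³`, so that `Σ₀ = {A = B = 0}`.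
Using `I₁⁽²⁾, I₂⁽²⁾` to clear the first two coordinates of `D⁽²⁾` and `R⁽²⁾` gives
`D⁽²⁾ + x₁I₁⁽²⁾ + y₁I₂⁽²⁾ = −3 (0, 0, A, B)` and `R⁽²⁾ + y₁I₁⁽²⁾ − x₁I₂⁽²⁾ = (0, 0, −B, A)`,
so the determinant of the four fields is `−3 (A² + B²)`, which vanishes exactly on `Σ₀`.
-/

/-- The rows are the values of `D⁽²⁾, R⁽²⁾, I₁⁽²⁾, I₂⁽²⁾` at `(x₁, y₁, x₂, y₂)`. -/
def prolongedFrame (x₁ y₁ x₂ y₂ : ℝ) : Matrix (Fin 4) (Fin 4) ℝ :=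
  !![-x₁, -y₁, -3 * x₂, -3 * y₂;
    -y₁, x₁, -y₂, x₂;
    1, 0, -4 * x₁ * y₁, 6 * x₁ ^ 2 + 2 * y₁ ^ 2;
    0, 1, -2 * x₁ ^ 2 - 6 * y₁ ^ 2, 4 * x₁ * y₁]

theorem det_prolongedFrame (x₁ y₁ x₂ y₂ : ℝ) :
    (prolongedFrame x₁ y₁ x₂ y₂).det =
      -3 * ((x₂ - (-2 * x₁ ^ 2 * y₁ - 2 * y₁ ^ 3)) * (x₂ - (-2 * x₁ ^ 2 * y₁ - 2 * y₁ ^ 3)) +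
        (y₂ - (2 * x₁ * y₁ ^ 2 + 2 * x₁ ^ 3)) * (y₂ - (2 * x₁ * y₁ ^ 2 + 2 * x₁ ^ 3))) := by
  simp [prolongedFrame, Matrix.det_succ_row_zero, Fin.sum_univ_succ, Fin.succAbove]
  ring

theorem det_prolongedFrame_ne_zero {x₁ y₁ x₂ y₂ : ℝ}
    (h : ¬(x₂ = -2 * x₁ ^ 2 * y₁ - 2 * y₁ ^ 3 ∧ y₂ = 2 * x₁ * y₁ ^ 2 + 2 * x₁ ^ 3)) :
    (prolongedFrame x₁ y₁ x₂ y₂).det ≠ 0 := by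
  rw [det_prolongedFrame]
  refine mul_ne_zero (by norm_num) ?_
  rwa [Ne, mul_self_add_mul_self_eq_zero, sub_eq_zero, sub_eq_zero]

/-- Off the chain locus `Σ₀ = {x₂ + 2x₁²y₁ + 2y₁³ = 0, y₂ − 2x₁y₁² − 2x₁³ = 0}`, the
values of the four prolonged fields `D⁽²⁾, R⁽²⁾, I₁⁽²⁾, I₂⁽²⁾` are linearly
independent, hence span the tangent space ℝ⁴. -/
theorem prolonged_fields_span_off_chain_locus (x₁ y₁ x₂ y₂ : ℝ)
    (h : ¬(x₂ = -2 * x₁ ^ 2 * y₁ - 2 * y₁ ^ 3 ∧ y₂ = 2 * x₁ * y₁ ^ 2 + 2 * x₁ ^ 3)) :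
    LinearIndependent ℝ
      ![(![-x₁, -y₁, -3 * x₂, -3 * y₂] : Fin 4 → ℝ),
        ![-y₁, x₁, -y₂, x₂],
        ![1, 0, -4 * x₁ * y₁, 6 * x₁ ^ 2 + 2 * y₁ ^ 2],
        ![0, 1, -2 * x₁ ^ 2 - 6 * y₁ ^ 2, 4 * x₁ * y₁]] :=
  Matrix.linearIndependent_rows_of_det_ne_zero (det_prolongedFrame_ne_zero h)
end

section
/- At every point p = (x₁,y₁,x₂,y₂) of Σ₀ = {x₂ = −2x₁²y₁ − 2y₁³, y₂ = 2x₁y₁² + 2x₁³}, the span of the values D⁽²⁾(p), R⁽²⁾(p), I₁⁽²⁾(p), I₂⁽²⁾(p), J⁽²⁾(p) in ℝ⁴ is exactly 2-dimensional. -/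
/-!
On `Σ₀` the dilation and rotation values are combinations of the two invariant fields,
`D⁽²⁾ = -x₁ I₁⁽²⁾ - y₁ I₂⁽²⁾` and `R⁽²⁾ = -y₁ I₁⁽²⁾ + x₁ I₂⁽²⁾`, while `J⁽²⁾ = 0`. Hence the span
is that of `I₁⁽²⁾, I₂⁽²⁾`, which are independent because their first two coordinates are
`(1, 0)` and `(0, 1)`.
-/

open Submodule Module

theorem linearIndependent_pair_of_triangular {K ι : Type*} [Field K] {u v : ι → K} {i j : ι}
    (hui : u i = 1) (hvi : v i = 0) (hvj : v j = 1) : LinearIndependent K ![u, v] := by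
  refine LinearIndependent.pair_iff.2 fun s t hst => ?_
  have hs : s = 0 := by simpa [hui, hvi] using congr_fun hst i
  subst hs
  exact ⟨rfl, by simpa [hvj] using congr_fun hst j⟩

theorem finrank_span_pair_of_triangular {K ι : Type*} [Field K] {u v : ι → K} {i j : ι}
    (hui : u i = 1) (hvi : v i = 0) (hvj : v j = 1) : finrank K (span K {u, v}) = 2 := by
  rw [← Matrix.range_cons_cons_empty u v ![],
    finrank_span_eq_card (linearIndependent_pair_of_triangular hui hvi hvj), Fintype.card_fin]

section ChainLocus

variable {x₁ y₁ x₂ y₂ : ℝ}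

theorem dilation_eq_on_chain_locus (h₁ : x₂ = -2 * x₁ ^ 2 * y₁ - 2 * y₁ ^ 3)
    (h₂ : y₂ = 2 * x₁ * y₁ ^ 2 + 2 * x₁ ^ 3) :
    (![-x₁, -y₁, -3 * x₂, -3 * y₂] : Fin 4 → ℝ) =
      -x₁ • ![1, 0, -4 * x₁ * y₁, 6 * x₁ ^ 2 + 2 * y₁ ^ 2] +
        -y₁ • ![0, 1, -2 * x₁ ^ 2 - 6 * y₁ ^ 2, 4 * x₁ * y₁] := by
  ext i; fin_cases i <;> simp [h₁, h₂] <;> ring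

theorem rotation_eq_on_chain_locus (h₁ : x₂ = -2 * x₁ ^ 2 * y₁ - 2 * y₁ ^ 3)
    (h₂ : y₂ = 2 * x₁ * y₁ ^ 2 + 2 * x₁ ^ 3) :
    (![-y₁, x₁, -y₂, x₂] : Fin 4 → ℝ) =
      -y₁ • ![1, 0, -4 * x₁ * y₁, 6 * x₁ ^ 2 + 2 * y₁ ^ 2] +
        x₁ • ![0, 1, -2 * x₁ ^ 2 - 6 * y₁ ^ 2, 4 * x₁ * y₁] := by
  ext i; fin_cases i <;> simp [h₁, h₂] <;> ring

end ChainLocus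

/-- At every point of the chain locus `Σ₀ = {x₂ = −2x₁²y₁ − 2y₁³, y₂ = 2x₁y₁² + 2x₁³}`,
the span of the values of `D⁽²⁾, R⁽²⁾, I₁⁽²⁾, I₂⁽²⁾, J⁽²⁾` in ℝ⁴ is exactly
2-dimensional. -/
theorem prolonged_fields_span_dim_two_on_chain_locus (x₁ y₁ x₂ y₂ : ℝ)
    (h₁ : x₂ = -2 * x₁ ^ 2 * y₁ - 2 * y₁ ^ 3)
    (h₂ : y₂ = 2 * x₁ * y₁ ^ 2 + 2 * x₁ ^ 3) :
    Module.finrank ℝ (Submodule.span ℝ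
      ({(![-x₁, -y₁, -3 * x₂, -3 * y₂] : Fin 4 → ℝ),
        ![-y₁, x₁, -y₂, x₂],
        ![1, 0, -4 * x₁ * y₁, 6 * x₁ ^ 2 + 2 * y₁ ^ 2],
        ![0, 1, -2 * x₁ ^ 2 - 6 * y₁ ^ 2, 4 * x₁ * y₁],
        ![0, 0, 0, 0]} : Set (Fin 4 → ℝ))) = 2 := by
  set I₁ : Fin 4 → ℝ := ![1, 0, -4 * x₁ * y₁, 6 * x₁ ^ 2 + 2 * y₁ ^ 2]
  set I₂ : Fin 4 → ℝ := ![0, 1, -2 * x₁ ^ 2 - 6 * y₁ ^ 2, 4 * x₁ * y₁]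
  have hD : ![-x₁, -y₁, -3 * x₂, -3 * y₂] ∈ span ℝ {I₁, I₂} :=
    mem_span_pair.2 ⟨_, _, (dilation_eq_on_chain_locus h₁ h₂).symm⟩
  have hR : ![-y₁, x₁, -y₂, x₂] ∈ span ℝ {I₁, I₂} :=
    mem_span_pair.2 ⟨_, _, (rotation_eq_on_chain_locus h₁ h₂).symm⟩
  have hJ : (![0, 0, 0, 0] : Fin 4 → ℝ) = 0 := by ext i; fin_cases i <;> rfl
  have hspan : span ℝ {![-x₁, -y₁, -3 * x₂, -3 * y₂], ![-y₁, x₁, -y₂, x₂], I₁, I₂,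
      ![0, 0, 0, 0]} = span ℝ {I₁, I₂} := by
    refine le_antisymm (span_le.2 ?_) (span_mono ?_)
    · simp only [Set.insert_subset_iff, Set.singleton_subset_iff, SetLike.mem_coe, hJ]
      exact ⟨hD, hR, subset_span (by simp), subset_span (by simp), zero_mem _⟩
    · simp [Set.insert_subset_iff]
  rw [hspan]
  exact finrank_span_pair_of_triangular (i := 0) (j := 1) rfl rfl rfl
end

section
/- If a biholomorphism (z,w) ↦ (z + f(z,w), w + g(z,w)) with f,g vanishing to order ≥ 2 at 0 maps the hypersurface {v = z·z̄ + O₃(z,z̄,u)} to {v' = z'·z̄' + O₃(z',z̄',u')}, then writing g(z,w) = α z² + β zw + c w² + O₃(z,w), one must have α = 0, β = 0, and c ∈ ℝ (i.e. g_{zz}(0) = 0, g_{zw}(0) = 0, Im g_{ww}(0) = 0). -/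
/-!
Restrict everything to the ray `(z, u) = (t z₀, t u₀)`, `t → 0`. On `M` we have
`w = u + i F(z, u) = u + O(t²)`, and the fundamental identity says
`Im g(z, w) = F'(z', u') - F(z, u)` with `z' = z + O(t²)`; since `F` and `F'` both agree with
`|z|²` to third order, `Im g(z, w) = O(t³)`. Replacing `g(z, w)` by its quadratic part at `(z, u)`
costs another `O(t³)`, so `t² Im(α z₀² + β z₀ u₀ + c u₀²) = O(t³)`. Hence this imaginary part
vanishes for all `z₀ ∈ ℂ`, `u₀ ∈ ℝ`, which forces `α = β = 0` and `c ∈ ℝ`.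
-/

open Complex Filter Topology Asymptotics

lemma abs_norm_add_sq_sub_norm_sq_le {E : Type*} [SeminormedAddCommGroup E] (a b : E) :
    |‖a + b‖ ^ 2 - ‖a‖ ^ 2| ≤ ‖b‖ * (2 * ‖a‖ + ‖b‖) := by
  have h₁ : |‖a + b‖ - ‖a‖| ≤ ‖b‖ := by simpa using abs_norm_sub_norm_le (a + b) a
  have h₂ : ‖a + b‖ + ‖a‖ ≤ 2 * ‖a‖ + ‖b‖ := by linarith [norm_add_le a b]
  calc |‖a + b‖ ^ 2 - ‖a‖ ^ 2| = |‖a + b‖ - ‖a‖| * (‖a + b‖ + ‖a‖) := by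
        rw [sq_sub_sq, abs_mul, abs_of_nonneg (by positivity : 0 ≤ ‖a + b‖ + ‖a‖), mul_comm]
    _ ≤ ‖b‖ * (2 * ‖a‖ + ‖b‖) := mul_le_mul h₁ h₂ (by positivity) (norm_nonneg b)

lemma eq_zero_of_isBigO_pow_mul {𝕜 : Type*} [NontriviallyNormedField 𝕜] {a : 𝕜} {n : ℕ}
    (h : (fun t : 𝕜 => t ^ n * a) =O[𝓝 0] fun t => t ^ (n + 1)) : a = 0 := by
  have hdiv := ((isBigO_refl (fun t : 𝕜 => (t ^ n)⁻¹) _).mul (h.mono nhdsWithin_le_nhds) :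
    (fun t : 𝕜 => (t ^ n)⁻¹ * (t ^ n * a)) =O[𝓝[≠] 0] fun t => (t ^ n)⁻¹ * t ^ (n + 1))
  have hne : ∀ᶠ t : 𝕜 in 𝓝[≠] 0, t ^ n ≠ 0 :=
    eventually_mem_nhdsWithin.mono fun t ht => pow_ne_zero n ht
  have ha : (fun _ : 𝕜 => a) =O[𝓝[≠] 0] id :=
    hdiv.congr' (hne.mono fun t ht => inv_mul_cancel_left₀ ht a)
      (hne.mono fun t ht => by simp [pow_succ, inv_mul_cancel_left₀ ht])
  exact tendsto_const_nhds_iff.1 (ha.trans_tendsto (tendsto_id.mono_left nhdsWithin_le_nhds))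

namespace Asymptotics

variable {ι E : Type*} [Norm E] {l : Filter ι} {f : ι → ℂ} {g : ι → E}

lemma IsBigO.re (h : f =O[l] g) : (fun i => (f i).re) =O[l] g :=
  (isBigO_of_le l fun i => abs_re_le_norm (f i)).trans h

lemma IsBigO.im (h : f =O[l] g) : (fun i => (f i).im) =O[l] g :=
  (isBigO_of_le l fun i => abs_im_le_norm (f i)).trans h

end Asymptotics

section

variable {ι : Type*} {l : Filter ι} {r : ι → ℝ}

lemma eventually_of_forall_norm_lt {E F : Type*} [SeminormedAddCommGroup E]
    [SeminormedAddCommGroup F] {P : E → F → Prop}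
    (h : ∃ ε > 0, ∀ x y, ‖x‖ < ε → ‖y‖ < ε → P x y) {x : ι → E} {y : ι → F}
    (hx : Tendsto x l (𝓝 0)) (hy : Tendsto y l (𝓝 0)) : ∀ᶠ i in l, P (x i) (y i) := by
  obtain ⟨ε, hε, hP⟩ := h
  filter_upwards [hx (Metric.ball_mem_nhds 0 hε), hy (Metric.ball_mem_nhds 0 hε)] with i hxi hyi
  exact hP _ _ (mem_ball_zero_iff.1 hxi) (mem_ball_zero_iff.1 hyi)

lemma isBigO_pow_succ (hr : Tendsto r l (𝓝 0)) (n : ℕ) :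
    (fun i => r i ^ (n + 1)) =O[l] fun i => r i ^ n :=
  ((isLittleO_pow_pow n.lt_succ_self).comp_tendsto hr).isBigO

lemma isBigO_sq (hr : Tendsto r l (𝓝 0)) : (fun i => r i ^ 2) =O[l] r := by
  simpa using isBigO_pow_succ hr 1

lemma isBigO_norm_add_sq_sub_norm_sq {E : Type*} [SeminormedAddCommGroup E]
    (hr : Tendsto r l (𝓝 0)) {a b : ι → E} (ha : a =O[l] r) (hb : b =O[l] fun i => r i ^ 2) :
    (fun i => ‖a i + b i‖ ^ 2 - ‖a i‖ ^ 2) =O[l] fun i => r i ^ 3 := by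
  have hbound : (fun i => ‖b i‖ * (2 * ‖a i‖ + ‖b i‖)) =O[l] fun i => r i ^ 2 * r i :=
    hb.norm_left.mul ((ha.norm_left.const_mul_left 2).add (hb.norm_left.trans (isBigO_sq hr)))
  refine ((isBigO_of_le l fun i => ?_).trans hbound).congr_right fun i => (pow_succ _ 2).symm
  rw [Real.norm_eq_abs, Real.norm_of_nonneg (by positivity)]
  exact abs_norm_add_sq_sub_norm_sq_le (a i) (b i)

def VanishesToOrder {E F G : Type*} [Norm E] [Norm F] [Norm G] (φ : E → F → G) (n : ℕ) :
    Prop :=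
  ∃ C > 0, ∃ ε > 0, ∀ x y, ‖x‖ < ε → ‖y‖ < ε → ‖φ x y‖ ≤ C * (‖x‖ + ‖y‖) ^ n

lemma VanishesToOrder.isBigO_comp {E F G : Type*} [NormedAddCommGroup E]
    [NormedAddCommGroup F] [Norm G] {φ : E → F → G} {n : ℕ} (h : VanishesToOrder φ n)
    (hr : Tendsto r l (𝓝 0)) {x : ι → E} {y : ι → F} (hx : x =O[l] r) (hy : y =O[l] r) :
    (fun i => φ (x i) (y i)) =O[l] fun i => r i ^ n := by
  obtain ⟨C, -, ε, hε, hb⟩ := h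
  have hxy : (fun i => φ (x i) (y i)) =O[l] fun i => (‖x i‖ + ‖y i‖) ^ n := by
    refine IsBigO.of_bound C ?_
    filter_upwards [eventually_of_forall_norm_lt ⟨ε, hε, hb⟩ (hx.trans_tendsto hr)
      (hy.trans_tendsto hr)] with i hi
    rwa [Real.norm_of_nonneg (by positivity)]
  exact hxy.trans ((hx.norm_left.add hy.norm_left).pow n)

def binaryQuadratic (α β c z w : ℂ) : ℂ := α * z ^ 2 + β * z * w + c * w ^ 2

/-- The `w`-coordinate of the point of the hypersurface `v = F(z, u)` lying over `(z, u)`. -/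
def graphW (F : ℂ → ℝ → ℝ) (z : ℂ) (u : ℝ) : ℂ := u + I * F z u

@[simp] lemma graphW_re (F : ℂ → ℝ → ℝ) (z : ℂ) (u : ℝ) : (graphW F z u).re = u := by
  simp [graphW]

@[simp] lemma graphW_im (F : ℂ → ℝ → ℝ) (z : ℂ) (u : ℝ) : (graphW F z u).im = F z u := by
  simp [graphW]

lemma im_binaryQuadratic_ofReal_mul (α β c z w : ℂ) (t : ℝ) :
    (binaryQuadratic α β c (t * z) (t * w)).im = t ^ 2 * (binaryQuadratic α β c z w).im := by
  rw [← im_ofReal_mul, binaryQuadratic, binaryQuadratic]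
  push_cast
  ring_nf

lemma binaryQuadratic_coeffs_of_im_eq_zero {α β c : ℂ}
    (h : ∀ (z : ℂ) (u : ℝ), (binaryQuadratic α β c z u).im = 0) :
    α = 0 ∧ β = 0 ∧ c.im = 0 := by
  have hα_im : α.im = 0 := by simpa [binaryQuadratic] using h 1 0
  have hα_re : α.re = 0 := by simpa [binaryQuadratic, sq, hα_im] using h (1 + I) 0
  have hc : c.im = 0 := by simpa [binaryQuadratic] using h 0 1
  have hβ_im : β.im = 0 := by simpa [binaryQuadratic, hα_im, hc] using h 1 1
  have hβ_re : β.re = 0 := by simpa [binaryQuadratic, sq, hα_im, hc] using h I 1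
  exact ⟨Complex.ext hα_re hα_im, Complex.ext hβ_re hβ_im, hc⟩

lemma isBigO_binaryQuadratic (α β c : ℂ) {z w : ι → ℂ} (hz : z =O[l] r) (hw : w =O[l] r) :
    (fun i => binaryQuadratic α β c (z i) (w i)) =O[l] fun i => r i ^ 2 := by
  simp only [binaryQuadratic, sq]
  exact (((hz.mul hz).const_mul_left α).add ((hz.const_mul_left β).mul hw)).add
    ((hw.mul hw).const_mul_left c) |>.congr_left fun i => by ring

lemma isBigO_binaryQuadratic_sub (α β c : ℂ) (hr : Tendsto r l (𝓝 0)) {z u w : ι → ℂ}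
    (hz : z =O[l] r) (hu : u =O[l] r) (hwu : (fun i => w i - u i) =O[l] fun i => r i ^ 2) :
    (fun i => binaryQuadratic α β c (z i) (w i) - binaryQuadratic α β c (z i) (u i))
      =O[l] fun i => r i ^ 3 := by
  have hfactor : (fun i => β * z i + c * ((w i - u i) + 2 * u i)) =O[l] r :=
    (hz.const_mul_left β).add
      (((hwu.trans (isBigO_sq hr)).add (hu.const_mul_left 2)).const_mul_left c)
  exact (hwu.mul hfactor).congr (fun i => by simp only [binaryQuadratic]; ring)
    fun i => (pow_succ _ 2).symm

lemma isBigO_graphW_sub {F : ℂ → ℝ → ℝ} (hF : VanishesToOrder (fun z u => F z u - ‖z‖ ^ 2) 3)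
    (hr : Tendsto r l (𝓝 0)) {z : ι → ℂ} {u : ι → ℝ} (hz : z =O[l] r) (hu : u =O[l] r) :
    (fun i => graphW F (z i) (u i) - u i) =O[l] fun i => r i ^ 2 := by
  have hF₂ : (fun i => F (z i) (u i)) =O[l] fun i => r i ^ 2 :=
    (((hF.isBigO_comp hr hz hu).trans (isBigO_pow_succ hr 2)).add (hz.norm_left.pow 2)).congr_left
      fun i => sub_add_cancel _ _
  exact ((isBigO_ofReal_left.2 hF₂).const_mul_left I).congr_left fun i => by simp [graphW]

theorem isBigO_im_binaryQuadratic {f g : ℂ × ℂ → ℂ} {F F' : ℂ → ℝ → ℝ} {α β c : ℂ}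
    (hf : VanishesToOrder (fun z w => f (z, w)) 2)
    (hg : VanishesToOrder (fun z w => g (z, w) - binaryQuadratic α β c z w) 3)
    (hF : VanishesToOrder (fun z u => F z u - ‖z‖ ^ 2) 3)
    (hF' : VanishesToOrder (fun z u => F' z u - ‖z‖ ^ 2) 3)
    (hmap : ∃ ε > 0, ∀ (z : ℂ) (u : ℝ), ‖z‖ < ε → ‖u‖ < ε →
      (graphW F z u + g (z, graphW F z u)).im
        = F' (z + f (z, graphW F z u)) (graphW F z u + g (z, graphW F z u)).re)
    (hr : Tendsto r l (𝓝 0)) {z : ι → ℂ} {u : ι → ℝ} (hz : z =O[l] r) (hu : u =O[l] r) :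
    (fun i => (binaryQuadratic α β c (z i) (u i)).im) =O[l] fun i => r i ^ 3 := by
  set w : ι → ℂ := fun i => graphW F (z i) (u i)
  have hu_cast : (fun i => (u i : ℂ)) =O[l] r := isBigO_ofReal_left.2 hu
  have hwu : (fun i => w i - u i) =O[l] fun i => r i ^ 2 := isBigO_graphW_sub hF hr hz hu
  have hw : w =O[l] r :=
    ((hwu.trans (isBigO_sq hr)).add hu_cast).congr_left fun i => sub_add_cancel _ _
  have hf₂ : (fun i => f (z i, w i)) =O[l] fun i => r i ^ 2 := hf.isBigO_comp hr hz hw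
  have hgq : (fun i => g (z i, w i) - binaryQuadratic α β c (z i) (w i)) =O[l] fun i => r i ^ 3 :=
    hg.isBigO_comp hr hz hw
  have hg₂ : (fun i => g (z i, w i)) =O[l] fun i => r i ^ 2 :=
    ((hgq.trans (isBigO_pow_succ hr 2)).add (isBigO_binaryQuadratic α β c hz hw)).congr_left
      fun i => sub_add_cancel _ _
  have hz' : (fun i => z i + f (z i, w i)) =O[l] r := hz.add (hf₂.trans (isBigO_sq hr))
  have hu' : (fun i => (w i + g (z i, w i)).re) =O[l] r :=
    (hu.add (hg₂.trans (isBigO_sq hr)).re).congr_left fun i => by simp [w]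
  have hfundamental : ∀ᶠ i in l,
      (F' (z i + f (z i, w i)) (w i + g (z i, w i)).re - ‖z i + f (z i, w i)‖ ^ 2)
        + (‖z i + f (z i, w i)‖ ^ 2 - ‖z i‖ ^ 2) - (F (z i) (u i) - ‖z i‖ ^ 2)
        = (g (z i, w i)).im := by
    filter_upwards [eventually_of_forall_norm_lt hmap (hz.trans_tendsto hr) (hu.trans_tendsto hr)]
      with i hi
    simp only [w, add_im, graphW_im] at hi ⊢
    linarith
  have hgim : (fun i => (g (z i, w i)).im) =O[l] fun i => r i ^ 3 :=
    (((hF'.isBigO_comp hr hz' hu').add (isBigO_norm_add_sq_sub_norm_sq hr hz hf₂)).sub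
      (hF.isBigO_comp hr hz hu)).congr' hfundamental EventuallyEq.rfl
  exact (hgim.sub (hgq.add (isBigO_binaryQuadratic_sub α β c hr hz hu_cast hwu)).im).congr_left
    fun i => by simp only [add_im, sub_im]; ring

end

/-- If a biholomorphism `(z,w) ↦ (z + f(z,w), w + g(z,w))`, with `f, g` vanishing to
order ≥ 2 at the origin, maps `{v = z z̄ + O₃(z,z̄,u)}` to `{v' = z' z̄' + O₃}`, and if
`g(z,w) = α z² + β z w + c w² + O₃(z,w)`, then `α = 0`, `β = 0` and `c ∈ ℝ`.
Hypersurfaces are graphed as `v = F(z,u)` with `F z u = |z|² + O₃(|z|,|u|)`; the map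
sends `M` to `M'` means the fundamental identity
`Im(w + g(z,w)) = F'(z + f(z,w), Re(w + g(z,w)))` holds with `w = u + i F(z,u)`. -/
theorem quadratic_part_of_normalizing_map
    (f g : ℂ × ℂ → ℂ) (F F' : ℂ → ℝ → ℝ) (α β c : ℂ)
    -- f and g vanish to order ≥ 2 at 0:
    (hf : ∃ C > 0, ∃ ε > 0, ∀ z w : ℂ, ‖z‖ < ε → ‖w‖ < ε →
      ‖f (z, w)‖ ≤ C * (‖z‖ + ‖w‖) ^ 2)
    -- quadratic part of g:
    (hg : ∃ C > 0, ∃ ε > 0, ∀ z w : ℂ, ‖z‖ < ε → ‖w‖ < ε →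
      ‖g (z, w) - (α * z ^ 2 + β * z * w + c * w ^ 2)‖ ≤ C * (‖z‖ + ‖w‖) ^ 3)
    -- M : v = z z̄ + O₃(z,z̄,u):
    (hF : ∃ C > 0, ∃ ε > 0, ∀ z : ℂ, ∀ u : ℝ, ‖z‖ < ε → |u| < ε →
      |F z u - ‖z‖ ^ 2| ≤ C * (‖z‖ + |u|) ^ 3)
    -- M' : v' = z' z̄' + O₃(z',z̄',u'):
    (hF' : ∃ C > 0, ∃ ε > 0, ∀ z : ℂ, ∀ u : ℝ, ‖z‖ < ε → |u| < ε →
      |F' z u - ‖z‖ ^ 2| ≤ C * (‖z‖ + |u|) ^ 3)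
    -- the fundamental identity: the map sends M into M':
    (hmap : ∃ ε > 0, ∀ z : ℂ, ∀ u : ℝ, ‖z‖ < ε → |u| < ε →
      (((u : ℂ) + Complex.I * (F z u : ℂ)) + g (z, (u : ℂ) + Complex.I * (F z u : ℂ))).im
        = F' (z + f (z, (u : ℂ) + Complex.I * (F z u : ℂ)))
            ((((u : ℂ) + Complex.I * (F z u : ℂ))
              + g (z, (u : ℂ) + Complex.I * (F z u : ℂ))).re)) :
    α = 0 ∧ β = 0 ∧ c.im = 0 := by
  refine binaryQuadratic_coeffs_of_im_eq_zero fun z₀ u₀ => eq_zero_of_isBigO_pow_mul (n := 2) ?_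
  have hz : (fun t : ℝ => (t : ℂ) * z₀) =O[𝓝 0] id :=
    IsBigO.of_bound ‖z₀‖ (Eventually.of_forall fun t => by simp [mul_comm])
  have hu : (fun t : ℝ => t * u₀) =O[𝓝 0] id :=
    IsBigO.of_bound |u₀| (Eventually.of_forall fun t => by simp [mul_comm])
  have h := isBigO_im_binaryQuadratic hf hg hF hF' hmap tendsto_id hz hu
  simpa only [ofReal_mul, im_binaryQuadratic_ofReal_mul, id] using h
end

section
/- Suppose five real-analytic (or formal) functions f₀, f₁, f₂, g₀, g₁ of a real variable u satisfy: (i) g₀ − ḡ₀ ≡ 0; (ii) 2f̄₀ + i g₁ ≡ 0; (iii) f₁ + f̄₁ − g₀' ≡ 0; (iv) 2f₂ − 2i f̄₀' − g₁' ≡ 0; (v) f₁' − f̄₁' ≡ 0; (vi) f₂' ≡ 0 and −f̄₀'' − (i/2)g₁'' ≡ 0; (vii) f₁'' + f̄₁'' ≡ 0; together with initial conditions f₀(0) = f₀'(0) = 0, f₁(0) = 0, g₀(0) = g₀'(0) = 0, Re g₀''(0) = 0, g₁(0) = 0. Then f₀ ≡ f₁ ≡ f₂ ≡ 0 and g₀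 ≡ g₁ ≡ 0. -/
/-!
The system splits into two decoupled parts. By (ii) and (iv), `g₁ = 2i f̄₀` and `f₂ = 2i f̄₀'`,
so (vi) says `f₀'' ≡ 0`. By (v) `f₁'` is real, hence so is `f₁''`, and (vii) gives `f₁'' ≡ 0`;
by (iii) `g₀'' = 2 f₁'`, so `Re g₀''(0) = 0` forces `f₁'(0) = 0`. A function with vanishing second
derivative and vanishing value and slope at `0` is zero, and then `g₀' = 2 Re f₁ ≡ 0`.
-/

open Complex ComplexConjugate

theorem deriv_conj_apply (f : ℝ → ℂ) (u : ℝ) :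
    deriv (fun x => conj (f x)) u = conj (deriv f u) :=
  deriv.star

theorem conj_deriv_eq_self {f : ℝ → ℂ} (hf : ∀ u, conj (f u) = f u) (u : ℝ) :
    conj (deriv f u) = deriv f u := by
  rw [← deriv_conj_apply, funext hf]

theorem eq_zero_of_deriv_deriv_eq_zero {E : Type*} [NormedAddCommGroup E] [NormedSpace ℝ E]
    {f : ℝ → E} (hf : Differentiable ℝ f) (hf' : Differentiable ℝ (deriv f))
    (hf'' : ∀ u, deriv (deriv f) u = 0) (h₀ : f 0 = 0) (h₀' : deriv f 0 = 0) : f = 0 := by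
  have hd : ∀ u, deriv f u = 0 := fun u => (is_const_of_deriv_eq_zero hf' hf'' u 0).trans h₀'
  exact funext fun u => (is_const_of_deriv_eq_zero hf hd u 0).trans h₀

theorem moser_system_f₀_f₂_g₁_eq_zero {f₀ f₂ g₁ : ℝ → ℂ} (hf₀ : ∀ u, AnalyticAt ℝ f₀ u)
    (e2 : ∀ u, 2 * conj (f₀ u) + I * g₁ u = 0)
    (e4 : ∀ u, 2 * f₂ u - 2 * I * conj (deriv f₀ u) - deriv g₁ u = 0)
    (e6 : ∀ u, deriv f₂ u = 0) (i1 : f₀ 0 = 0) (i2 : deriv f₀ 0 = 0) :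
    f₀ = 0 ∧ f₂ = 0 ∧ g₁ = 0 := by
  have hg₁ : g₁ = fun u => 2 * I * conj (f₀ u) :=
    funext fun u => by linear_combination (-I) * e2 u + g₁ u * I_sq
  have hf₂ : f₂ = fun u => 2 * I * conj (deriv f₀ u) := by
    funext u
    have hdg₁ : deriv g₁ u = 2 * I * conj (deriv f₀ u) := by
      rw [hg₁, deriv_const_mul_field, deriv_conj_apply]
    linear_combination (e4 u + hdg₁) / 2
  have hf₀'' : ∀ u, deriv (deriv f₀) u = 0 := fun u => by
    simpa [hf₂, deriv_const_mul_field, deriv_conj_apply] using e6 u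
  have hf₀zero : f₀ = 0 := eq_zero_of_deriv_deriv_eq_zero
    (fun u => (hf₀ u).differentiableAt) (fun u => (hf₀ u).deriv.differentiableAt) hf₀'' i1 i2
  refine ⟨hf₀zero, ?_, ?_⟩
  · ext u
    simp [hf₂, hf₀zero]
  · ext u
    simp [hg₁, hf₀zero]

theorem moser_system_f₁_g₀_eq_zero {f₁ g₀ : ℝ → ℂ} (hf₁ : ∀ u, AnalyticAt ℝ f₁ u)
    (hg₀ : ∀ u, AnalyticAt ℝ g₀ u)
    (e3 : ∀ u, f₁ u + conj (f₁ u) - deriv g₀ u = 0)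
    (e5 : ∀ u, deriv f₁ u - conj (deriv f₁ u) = 0)
    (e7 : ∀ u, deriv (deriv f₁) u + conj (deriv (deriv f₁) u) = 0)
    (i3 : f₁ 0 = 0) (i4 : g₀ 0 = 0) (i6 : (deriv (deriv g₀) 0).re = 0) :
    f₁ = 0 ∧ g₀ = 0 := by
  have hf₁'_real : ∀ u, conj (deriv f₁ u) = deriv f₁ u := fun u => by linear_combination -e5 u
  have hf₁'' : ∀ u, deriv (deriv f₁) u = 0 := fun u => by
    linear_combination (e7 u - conj_deriv_eq_self hf₁'_real u) / 2
  have hdg₀ : deriv g₀ = fun u => f₁ u + conj (f₁ u) := funext fun u => by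
    linear_combination -e3 u
  have hf₁'0 : deriv f₁ 0 = 0 := by
    have hddg₀ : deriv (deriv g₀) 0 = 2 * deriv f₁ 0 := by
      have hd : HasDerivAt (fun u => f₁ u + conj (f₁ u)) (deriv f₁ 0 + conj (deriv f₁ 0)) 0 :=
        (hf₁ 0).differentiableAt.hasDerivAt.add (hf₁ 0).differentiableAt.hasDerivAt.star
      rw [hdg₀, hd.deriv]
      linear_combination hf₁'_real 0
    apply Complex.ext
    · simpa [hddg₀] using i6
    · exact conj_eq_iff_im.mp (hf₁'_real 0)
  have hf₁zero : f₁ = 0 := eq_zero_of_deriv_deriv_eq_zero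
    (fun u => (hf₁ u).differentiableAt) (fun u => (hf₁ u).deriv.differentiableAt) hf₁'' i3 hf₁'0
  have hdg₀zero : ∀ u, deriv g₀ u = 0 := fun u => by simp [hdg₀, hf₁zero]
  exact ⟨hf₁zero, funext fun u =>
    (is_const_of_deriv_eq_zero (fun u => (hg₀ u).differentiableAt) hdg₀zero u 0).trans i4⟩

theorem moser_uniqueness_ode_system_general
    (f₀ f₁ f₂ g₀ g₁ : ℝ → ℂ)
    (hf₀ : ∀ u, AnalyticAt ℝ f₀ u) (hf₁ : ∀ u, AnalyticAt ℝ f₁ u)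
    (hg₀ : ∀ u, AnalyticAt ℝ g₀ u)
    -- (ii)  2 f̄₀ + i g₁ ≡ 0
    (e2 : ∀ u, 2 * (starRingEnd ℂ) (f₀ u) + I * g₁ u = 0)
    -- (iii)  f₁ + f̄₁ − g₀' ≡ 0
    (e3 : ∀ u, f₁ u + (starRingEnd ℂ) (f₁ u) - deriv g₀ u = 0)
    -- (iv)  2 f₂ − 2i f̄₀' − g₁' ≡ 0
    (e4 : ∀ u, 2 * f₂ u - 2 * I * (starRingEnd ℂ) (deriv f₀ u) - deriv g₁ u = 0)
    -- (v)  f₁' − f̄₁' ≡ 0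
    (e5 : ∀ u, deriv f₁ u - (starRingEnd ℂ) (deriv f₁ u) = 0)
    -- (vi)  f₂' ≡ 0  and  −f̄₀'' − (i/2) g₁'' ≡ 0
    (e6 : ∀ u, deriv f₂ u = 0)
    -- (vii)  f₁'' + f̄₁'' ≡ 0
    (e7 : ∀ u, deriv (deriv f₁) u + (starRingEnd ℂ) (deriv (deriv f₁) u) = 0)
    -- initial conditions
    (i1 : f₀ 0 = 0) (i2 : deriv f₀ 0 = 0) (i3 : f₁ 0 = 0)
    (i4 : g₀ 0 = 0) (i6 : (deriv (deriv g₀) 0).re = 0) :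
    (∀ u, f₀ u = 0) ∧ (∀ u, f₁ u = 0) ∧ (∀ u, f₂ u = 0) ∧
    (∀ u, g₀ u = 0) ∧ (∀ u, g₁ u = 0) := by
  obtain ⟨hf₀zero, hf₂zero, hg₁zero⟩ := moser_system_f₀_f₂_g₁_eq_zero hf₀ e2 e4 e6 i1 i2
  obtain ⟨hf₁zero, hg₀zero⟩ := moser_system_f₁_g₀_eq_zero hf₁ hg₀ e3 e5 e7 i3 i4 i6
  exact ⟨congrFun hf₀zero, congrFun hf₁zero, congrFun hf₂zero, congrFun hg₀zero,
    congrFun hg₁zero⟩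

/-- The uniqueness system for the Moser normal form.  Five real-analytic functions
`f₀, f₁, f₂, g₀, g₁ : ℝ → ℂ` satisfying the seven linear ODEs obtained by extracting
the coefficients of `z^j z̄^k` in `Re{ i g(z,u+izz̄) + 2 z̄ f(z,u+izz̄) } = 0`,
together with the stated initial conditions, all vanish identically. -/
theorem moser_uniqueness_ode_system
    (f₀ f₁ f₂ g₀ g₁ : ℝ → ℂ)
    (hf₀ : ∀ u, AnalyticAt ℝ f₀ u) (hf₁ : ∀ u, AnalyticAt ℝ f₁ u)
    (hf₂ : ∀ u, AnalyticAt ℝ f₂ u) (hg₀ : ∀ u, AnalyticAt ℝ g₀ u)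
    (hg₁ : ∀ u, AnalyticAt ℝ g₁ u)
    -- (i)  g₀ − ḡ₀ ≡ 0
    (e1 : ∀ u, g₀ u - (starRingEnd ℂ) (g₀ u) = 0)
    -- (ii)  2 f̄₀ + i g₁ ≡ 0
    (e2 : ∀ u, 2 * (starRingEnd ℂ) (f₀ u) + I * g₁ u = 0)
    -- (iii)  f₁ + f̄₁ − g₀' ≡ 0
    (e3 : ∀ u, f₁ u + (starRingEnd ℂ) (f₁ u) - deriv g₀ u = 0)
    -- (iv)  2 f₂ − 2i f̄₀' − g₁' ≡ 0
    (e4 : ∀ u, 2 * f₂ u - 2 * I * (starRingEnd ℂ) (deriv f₀ u) - deriv g₁ u = 0)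
    -- (v)  f₁' − f̄₁' ≡ 0
    (e5 : ∀ u, deriv f₁ u - (starRingEnd ℂ) (deriv f₁ u) = 0)
    -- (vi)  f₂' ≡ 0  and  −f̄₀'' − (i/2) g₁'' ≡ 0
    (e6 : ∀ u, deriv f₂ u = 0)
    (e6' : ∀ u, -(starRingEnd ℂ) (deriv (deriv f₀) u) - (I / 2) * deriv (deriv g₁) u = 0)
    -- (vii)  f₁'' + f̄₁'' ≡ 0
    (e7 : ∀ u, deriv (deriv f₁) u + (starRingEnd ℂ) (deriv (deriv f₁) u) = 0)
    -- initial conditions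
    (i1 : f₀ 0 = 0) (i2 : deriv f₀ 0 = 0) (i3 : f₁ 0 = 0)
    (i4 : g₀ 0 = 0) (i5 : deriv g₀ 0 = 0) (i6 : (deriv (deriv g₀) 0).re = 0)
    (i7 : g₁ 0 = 0) :
    (∀ u, f₀ u = 0) ∧ (∀ u, f₁ u = 0) ∧ (∀ u, f₂ u = 0) ∧
    (∀ u, g₀ u = 0) ∧ (∀ u, g₁ u = 0) :=
  moser_uniqueness_ode_system_general f₀ f₁ f₂ g₀ g₁ hf₀ hf₁ hg₀ e2 e3 e4 e5 e6 e7 i1 i2 i3 i4 i6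
end
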